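/- Let n ≥ 3, Ω = ZMod n, and let 𝓘 be an AST-regular partition of X. Then 𝓐(𝓘) = {R₀, R₁, R₂, R₃} ∪ {R_I : I ∈ 𝓘} is a circulant AST on Ω. -/
import Mathlib


open Set

namespace CirculantAST

/-- The trivial relation `R₀ = {(x,x,x) : x ∈ Ω}`. -/
def triv0 (Ω : Type*) : Set (Ω × Ω × Ω) := {t | t.1 = t.2.1 ∧ t.2.1 = t.2.2}

/-- The trivial relation `R₁ = {(x,y,y) : x ≠ y}`. -/
def triv1 (Ω : Type*) : Set (Ω × Ω × Ω) := {t | t.1 ≠ t.2.1 ∧ t.2.1 = t.2.2}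

/-- The trivial relation `R₂ = {(x,y,x) : x ≠ y}`. -/
def triv2 (Ω : Type*) : Set (Ω × Ω × Ω) := {t | t.1 = t.2.2 ∧ t.1 ≠ t.2.1}

/-- The trivial relation `R₃ = {(x,x,y) : x ≠ y}`. -/
def triv3 (Ω : Type*) : Set (Ω × Ω × Ω) := {t | t.1 = t.2.1 ∧ t.2.1 ≠ t.2.2}

/-- The set of the four trivial relations. -/
def trivials (Ω : Type*) : Set (Set (Ω × Ω × Ω)) := {triv0 Ω, triv1 Ω, triv2 Ω, triv3 Ω}

/-- Coordinate permutation of a triple: `(x₁,x₂,x₃) ↦ (x_{1σ}, x_{2σ}, x_{3σ})`. -/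
def permTriple {Ω : Type*} (σ : Equiv.Perm (Fin 3)) (t : Ω × Ω × Ω) : Ω × Ω × Ω :=
  (![t.1, t.2.1, t.2.2] (σ 0), ![t.1, t.2.1, t.2.2] (σ 1), ![t.1, t.2.1, t.2.2] (σ 2))

/-- An association scheme on triples (AST) on `Ω`, viewed as the set of its relations:
a partition of `Ω³` containing the four trivial relations and at least one further
(nontrivial) relation (i.e. `m ≥ 4`), satisfying axioms A1, A2, A3. -/
def IsAST (Ω : Type*) (A : Set (Set (Ω × Ω × Ω))) : Prop :=
  -- partition of Ω³ into nonempty relations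
  (∀ R ∈ A, R.Nonempty) ∧
  (∀ t : Ω × Ω × Ω, ∃! R, R ∈ A ∧ t ∈ R) ∧
  -- the four trivial relations belong to A
  trivials Ω ⊆ A ∧
  -- m ≥ 4 : there is at least one nontrivial relation
  (∃ R ∈ A, R ∉ trivials Ω) ∧
  -- A1
  (∀ R ∈ A, R ∉ trivials Ω →
    ∃ c : ℕ, 0 < c ∧ ∀ x y : Ω, x ≠ y → {z : Ω | (x, y, z) ∈ R}.ncard = c) ∧
  -- A2
  (∀ Ri ∈ A, ∀ Rj ∈ A, ∀ Rk ∈ A, ∀ Rl ∈ A, ∃ c : ℕ,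
    ∀ x y z : Ω, (x, y, z) ∈ Rl →
      {w : Ω | (w, y, z) ∈ Ri ∧ (x, w, z) ∈ Rj ∧ (x, y, w) ∈ Rk}.ncard = c) ∧
  -- A3
  (∀ R ∈ A, ∀ σ : Equiv.Perm (Fin 3), permTriple σ '' R ∈ A)

variable {n : ℕ}

/-- A ternary relation on `ZMod n` is a 3-circulant if it is invariant under
the simultaneous cyclic shift `+1` in all coordinates. -/
def IsCirculant (R : Set (ZMod n × ZMod n × ZMod n)) : Prop :=
  ∀ i j k : ZMod n, (i, j, k) ∈ R → (i + 1, j + 1, k + 1) ∈ R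

/-- A circulant AST: an AST on `ZMod n` each of whose relations is a 3-circulant. -/
def IsCirculantAST (A : Set (Set (ZMod n × ZMod n × ZMod n))) : Prop :=
  IsAST (ZMod n) A ∧ ∀ R ∈ A, IsCirculant R

/-- A nontrivial 3-circulant: nonempty and all triples have pairwise distinct entries. -/
def IsNontrivialCirculant (R : Set (ZMod n × ZMod n × ZMod n)) : Prop :=
  IsCirculant R ∧ R.Nonempty ∧
    ∀ t ∈ R, t.1 ≠ t.2.1 ∧ t.1 ≠ t.2.2 ∧ t.2.1 ≠ t.2.2

/-- The set `X = {(i,j) : i ≠ 0, j ≠ 0, i ≠ j}`. -/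
def Xset (n : ℕ) : Set (ZMod n × ZMod n) := {p | p.1 ≠ 0 ∧ p.2 ≠ 0 ∧ p.1 ≠ p.2}

/-- The 3-circulant `R_I = {(x, i+x, j+x) : x ∈ Ω, (i,j) ∈ I}`. -/
def RI (I : Set (ZMod n × ZMod n)) : Set (ZMod n × ZMod n × ZMod n) :=
  {t | ∃ x : ZMod n, ∃ p ∈ I, t = (x, p.1 + x, p.2 + x)}

/-- The transpose map `I ↦ I^T = {(j,i) : (i,j) ∈ I}`. -/
def transI (I : Set (ZMod n × ZMod n)) : Set (ZMod n × ZMod n) :=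
  (fun p => (p.2, p.1)) '' I

/-- The map `I ↦ I^τ = {(-i, j-i) : (i,j) ∈ I}`. -/
def tauI (I : Set (ZMod n × ZMod n)) : Set (ZMod n × ZMod n) :=
  (fun p => (-p.1, p.2 - p.1)) '' I

/-- An AST-regular partition of `X`. -/
def IsASTRegular (P : Set (Set (ZMod n × ZMod n))) : Prop :=
  -- a partition of X into nonempty parts
  (∀ I ∈ P, I ⊆ Xset n ∧ I.Nonempty) ∧
  (∀ p ∈ Xset n, ∃! I, I ∈ P ∧ p ∈ I) ∧
  -- (a) projections and regularity constants
  (∀ I ∈ P, Prod.fst '' I = {x : ZMod n | x ≠ 0} ∧ Prod.snd '' I = {x : ZMod n | x ≠ 0} ∧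
    ∃ c : ℕ, 0 < c ∧ ∀ x : ZMod n, x ≠ 0 →
      {j : ZMod n | (x, j) ∈ I}.ncard = c ∧ {i : ZMod n | (i, x) ∈ I}.ncard = c) ∧
  -- (b) invariance under T and τ
  (∀ I ∈ P, transI I ∈ P ∧ tauI I ∈ P) ∧
  -- (c) intersection numbers
  (∀ I ∈ P, ∀ J ∈ P, ∀ K ∈ P, ∀ L ∈ P, ∃ c : ℕ, ∀ q ∈ L,
    {w : ZMod n | w ≠ 0 ∧ w ≠ q.1 ∧ w ≠ q.2 ∧
      (q.1 - w, q.2 - w) ∈ I ∧ (w, q.2) ∈ J ∧ (q.1, w) ∈ K}.ncard = c)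

/-- The family of relations `𝓐(𝓘) = {R₀,R₁,R₂,R₃} ∪ {R_I : I ∈ 𝓘}`. -/
def ASTofPartition (P : Set (Set (ZMod n × ZMod n))) : Set (Set (ZMod n × ZMod n × ZMod n)) :=
  trivials (ZMod n) ∪ (RI '' P)

/-- The projection `σ₁₂ : (x₁,x₂,x₃) ↦ (x₁,x₂)`. -/
def sgm12 {Ω : Type*} (t : Ω × Ω × Ω) : Ω × Ω := (t.1, t.2.1)

/-- The projection `σ₁₃ : (x₁,x₂,x₃) ↦ (x₁,x₃)`. -/
def sgm13 {Ω : Type*} (t : Ω × Ω × Ω) : Ω × Ω := (t.1, t.2.2)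

/-- The projection `σ₂₃ : (x₁,x₂,x₃) ↦ (x₂,x₃)`. -/
def sgm23 {Ω : Type*} (t : Ω × Ω × Ω) : Ω × Ω := (t.2.1, t.2.2)

/-- `R` is thin with respect to the coordinate projection `f = σ_{ab}` if `f` is
one-to-one on `R` with image `Ω^[2] = {(x,y) : x ≠ y}`. -/
def ThinVia {Ω : Type*} (R : Set (Ω × Ω × Ω)) (f : Ω × Ω × Ω → Ω × Ω) : Prop :=
  Set.InjOn f R ∧ f '' R = {p : Ω × Ω | p.1 ≠ p.2}

/-- Regularity condition of Definition (a) with parameter `c`. -/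
def RegPar (I : Set (ZMod n × ZMod n)) (c : ℕ) : Prop :=
  Prod.fst '' I = {x : ZMod n | x ≠ 0} ∧ Prod.snd '' I = {x : ZMod n | x ≠ 0} ∧
  ∀ x : ZMod n, x ≠ 0 →
    {j : ZMod n | (x, j) ∈ I}.ncard = c ∧ {i : ZMod n | (i, x) ∈ I}.ncard = c

section Aux

variable {n : ℕ}

/-- Difference preimage: the 3-circulant determined by a set of difference pairs. -/
def dpre (S : Set (ZMod n × ZMod n)) : Set (ZMod n × ZMod n × ZMod n) :=
  {t | (t.2.1 - t.1, t.2.2 - t.1) ∈ S}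

def Dz (n : ℕ) : Set (ZMod n × ZMod n) := {p | p.1 = 0 ∧ p.2 = 0}
def Da (n : ℕ) : Set (ZMod n × ZMod n) := {p | p.1 ≠ 0 ∧ p.1 = p.2}
def Db (n : ℕ) : Set (ZMod n × ZMod n) := {p | p.2 = 0 ∧ p.1 ≠ 0}
def Dc (n : ℕ) : Set (ZMod n × ZMod n) := {p | p.1 = 0 ∧ p.2 ≠ 0}

def Qset (P : Set (Set (ZMod n × ZMod n))) : Set (Set (ZMod n × ZMod n)) :=
  insert (Dz n) (insert (Da n) (insert (Db n) (insert (Dc n) P)))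

lemma mem_Qset_iff {P : Set (Set (ZMod n × ZMod n))} {S : Set (ZMod n × ZMod n)} :
    S ∈ Qset P ↔ S = Dz n ∨ S = Da n ∨ S = Db n ∨ S = Dc n ∨ S ∈ P := by
  simp [Qset]

lemma triv0_eq_dpre : triv0 (ZMod n) = dpre (Dz n) := by
  ext ⟨x, y, z⟩
  simp only [triv0, dpre, Dz, Set.mem_setOf_eq, sub_eq_zero]
  constructor
  · rintro ⟨rfl, rfl⟩; exact ⟨rfl, rfl⟩
  · rintro ⟨rfl, h⟩; exact ⟨rfl, h.symm⟩

lemma triv1_eq_dpre : triv1 (ZMod n) = dpre (Da n) := by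
  ext ⟨x, y, z⟩
  simp only [triv1, dpre, Da, Set.mem_setOf_eq, sub_ne_zero, sub_left_inj]
  exact and_congr_left' ⟨Ne.symm, Ne.symm⟩

lemma triv2_eq_dpre : triv2 (ZMod n) = dpre (Db n) := by
  ext ⟨x, y, z⟩
  simp only [triv2, dpre, Db, Set.mem_setOf_eq, sub_ne_zero, sub_eq_zero]
  constructor
  · rintro ⟨rfl, h⟩; exact ⟨rfl, fun he => h he.symm⟩
  · rintro ⟨rfl, h⟩; exact ⟨rfl, fun he => h he.symm⟩

lemma triv3_eq_dpre : triv3 (ZMod n) = dpre (Dc n) := by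
  ext ⟨x, y, z⟩
  simp only [triv3, dpre, Dc, Set.mem_setOf_eq, sub_ne_zero, sub_eq_zero]
  constructor
  · rintro ⟨rfl, h⟩; exact ⟨rfl, fun he => h he.symm⟩
  · rintro ⟨rfl, h⟩; exact ⟨rfl, fun he => h he.symm⟩

lemma mem_RI_iff {I : Set (ZMod n × ZMod n)} {t : ZMod n × ZMod n × ZMod n} :
    t ∈ RI I ↔ (t.2.1 - t.1, t.2.2 - t.1) ∈ I := by
  constructor
  · rintro ⟨x, p, hp, rfl⟩; simpa using hp
  · intro h
    exact ⟨t.1, _, h, by simp⟩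

lemma RI_eq_dpre {I : Set (ZMod n × ZMod n)} : RI I = dpre I := by
  ext t; exact mem_RI_iff

lemma mem_ASTofPartition_iff {P : Set (Set (ZMod n × ZMod n))}
    {R : Set (ZMod n × ZMod n × ZMod n)} :
    R ∈ ASTofPartition P ↔ ∃ S ∈ Qset P, R = dpre S := by
  constructor
  · intro hR
    rcases hR with h | ⟨I, hI, rfl⟩
    · rcases h with rfl | rfl | rfl | rfl
      · exact ⟨Dz n, by simp [Qset], triv0_eq_dpre⟩
      · exact ⟨Da n, by simp [Qset], triv1_eq_dpre⟩
      · exact ⟨Db n, by simp [Qset], triv2_eq_dpre⟩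
      · exact ⟨Dc n, by simp [Qset], triv3_eq_dpre⟩
    · exact ⟨I, by simp [Qset, hI], RI_eq_dpre⟩
  · rintro ⟨S, hS, rfl⟩
    rcases mem_Qset_iff.1 hS with rfl | rfl | rfl | rfl | hS
    · exact Or.inl (by rw [← triv0_eq_dpre]; simp [trivials])
    · exact Or.inl (by rw [← triv1_eq_dpre]; simp [trivials])
    · exact Or.inl (by rw [← triv2_eq_dpre]; simp [trivials])
    · exact Or.inl (by rw [← triv3_eq_dpre]; simp [trivials])
    · exact Or.inr ⟨_, hS, RI_eq_dpre⟩

end Aux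
section Aux2

variable {n : ℕ}

lemma mem_transI {I : Set (ZMod n × ZMod n)} {a b : ZMod n} :
    (a, b) ∈ transI I ↔ (b, a) ∈ I := by
  constructor
  · rintro ⟨⟨i, j⟩, h, heq⟩
    simp only [Prod.mk.injEq] at heq
    obtain ⟨rfl, rfl⟩ := heq
    exact h
  · intro h; exact ⟨(b, a), h, rfl⟩

lemma mem_tauI {I : Set (ZMod n × ZMod n)} {a b : ZMod n} :
    (a, b) ∈ tauI I ↔ (-a, b - a) ∈ I := by
  constructor
  · rintro ⟨⟨i, j⟩, h, heq⟩
    simp only [Prod.mk.injEq] at heq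
    obtain ⟨h1, h2⟩ := heq
    have : (-a, b - a) = (i, j) := by
      rw [← h1, ← h2, Prod.mk.injEq]; constructor <;> ring
    rw [this]; exact h
  · intro h
    refine ⟨(-a, b - a), h, ?_⟩
    rw [Prod.mk.injEq]
    constructor <;> ring

/-- The transform `(i,j) ↦ (i-j, -j)`, as a composite of `transI` and `tauI`. -/
def sigmaI (I : Set (ZMod n × ZMod n)) : Set (ZMod n × ZMod n) :=
  transI (tauI (transI I))

lemma mem_sigmaI {I : Set (ZMod n × ZMod n)} {a b : ZMod n} :
    (a, b) ∈ sigmaI I ↔ (a - b, -b) ∈ I := by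
  rw [sigmaI, mem_transI, mem_tauI, mem_transI]

section WithP
variable {P : Set (Set (ZMod n × ZMod n))} (hP : IsASTRegular P)
include hP

lemma part_subset_X {I : Set (ZMod n × ZMod n)} (hI : I ∈ P) : I ⊆ Xset n :=
  (hP.1 I hI).1

lemma part_eq_part {I J : Set (ZMod n × ZMod n)} (hI : I ∈ P) (hJ : J ∈ P)
    {p : ZMod n × ZMod n} (hpI : p ∈ I) (hpJ : p ∈ J) : I = J := by
  obtain ⟨S, _, hu⟩ := hP.2.1 p (part_subset_X hP hI hpI)
  rw [hu I ⟨hI, hpI⟩, hu J ⟨hJ, hpJ⟩]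

lemma transI_mem_P {I : Set (ZMod n × ZMod n)} (hI : I ∈ P) : transI I ∈ P :=
  (hP.2.2.2.1 I hI).1

lemma tauI_mem_P {I : Set (ZMod n × ZMod n)} (hI : I ∈ P) : tauI I ∈ P :=
  (hP.2.2.2.1 I hI).2

lemma sigmaI_mem_P {I : Set (ZMod n × ZMod n)} (hI : I ∈ P) : sigmaI I ∈ P := by
  have h1 := (hP.2.2.2.1 I hI).1
  have h2 := (hP.2.2.2.1 _ h1).2
  exact (hP.2.2.2.1 _ h2).1

lemma Qset_unique {S S' : Set (ZMod n × ZMod n)} (hS : S ∈ Qset P) (hS' : S' ∈ Qset P)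
    {p : ZMod n × ZMod n} (hpS : p ∈ S) (hpS' : p ∈ S') : S = S' := by
  rcases mem_Qset_iff.1 hS with rfl | rfl | rfl | rfl | hS <;>
    rcases mem_Qset_iff.1 hS' with rfl | rfl | rfl | rfl | hS'
  all_goals try rfl
  all_goals try exact part_eq_part hP hS hS' hpS hpS'
  all_goals exfalso
  all_goals try have hX := part_subset_X hP hS hpS
  all_goals try have hX' := part_subset_X hP hS' hpS'
  all_goals simp only [Dz, Da, Db, Dc, Xset, Set.mem_setOf_eq] at *
  all_goals simp_all

lemma mem_part_iff {S S' : Set (ZMod n × ZMod n)} (hS : S ∈ Qset P) (hS' : S' ∈ Qset P)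
    {p : ZMod n × ZMod n} (hp : p ∈ S') : p ∈ S ↔ S = S' :=
  ⟨fun h => Qset_unique hP hS hS' h hp, fun h => h ▸ hp⟩

end WithP

lemma ncard_pin_one {S : Set (ZMod n)} {a : ZMod n} (h : ∀ v, v ∈ S ↔ v = a) :
    S.ncard = 1 := by
  have : S = {a} := by ext v; simpa using h v
  rw [this, Set.ncard_singleton]

lemma ncard_zero_of_forall_not {S : Set (ZMod n)} (h : ∀ v, v ∉ S) : S.ncard = 0 := by
  rw [Set.eq_empty_iff_forall_notMem.mpr h, Set.ncard_empty]

end Aux2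
section Aux3

variable {n : ℕ} {P : Set (Set (ZMod n × ZMod n))}

lemma keyA2 (hP : IsASTRegular P) {SI SJ SK SL : Set (ZMod n × ZMod n)}
    (hI : SI ∈ Qset P) (hJ : SJ ∈ Qset P) (hK : SK ∈ Qset P) (hL : SL ∈ Qset P) :
    ∃ c : ℕ, ∀ a b : ZMod n, (a, b) ∈ SL →
      {v : ZMod n | (a - v, b - v) ∈ SI ∧ (v, b) ∈ SJ ∧ (a, v) ∈ SK}.ncard = c := by
  classical
  have hDz : Dz n ∈ Qset P := by simp [Qset]
  have hDa : Da n ∈ Qset P := by simp [Qset]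
  have hDb : Db n ∈ Qset P := by simp [Qset]
  have hDc : Dc n ∈ Qset P := by simp [Qset]
  rcases mem_Qset_iff.1 hL with rfl | rfl | rfl | rfl | hLP
  -- ================= SL = Dz =================
  · refine ⟨{v : ZMod n | ((0:ZMod n) - v, (0:ZMod n) - v) ∈ SI ∧ (v, (0:ZMod n)) ∈ SJ ∧
      ((0:ZMod n), v) ∈ SK}.ncard, ?_⟩
    intro a b hab
    obtain ⟨ha, hb⟩ : a = 0 ∧ b = 0 := hab
    subst ha; subst hb; rfl
  -- ================= SL = Da =================
  · rcases mem_Qset_iff.1 hI with rfl | rfl | rfl | rfl | hIP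
    · -- SI = Dz : pin v = a
      by_cases hc : SJ = Da n ∧ SK = Da n
      · refine ⟨1, ?_⟩
        intro a b hab
        obtain ⟨ha, rfl⟩ : a ≠ 0 ∧ a = b := hab
        apply ncard_pin_one (a := a)
        intro v
        constructor
        · rintro ⟨⟨h1, _⟩, _, _⟩
          exact (sub_eq_zero.1 h1).symm
        · rintro rfl
          refine ⟨⟨sub_self _, sub_self _⟩, ?_, ?_⟩
          · rw [hc.1]; exact ⟨ha, rfl⟩
          · rw [hc.2]; exact ⟨ha, rfl⟩
      · refine ⟨0, ?_⟩
        intro a b hab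
        obtain ⟨ha, rfl⟩ : a ≠ 0 ∧ a = b := hab
        apply ncard_zero_of_forall_not
        rintro v ⟨⟨h1, _⟩, hJv, hKv⟩
        obtain rfl : v = a := (sub_eq_zero.1 h1).symm
        exact hc ⟨Qset_unique hP hJ hDa hJv ⟨ha, rfl⟩, Qset_unique hP hK hDa hKv ⟨ha, rfl⟩⟩
    · -- SI = Da : v ≠ a
      rcases mem_Qset_iff.1 hJ with rfl | rfl | rfl | rfl | hJP
      · refine ⟨0, ?_⟩
        intro a b hab
        obtain ⟨ha, rfl⟩ : a ≠ 0 ∧ a = b := hab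
        apply ncard_zero_of_forall_not
        rintro v ⟨_, ⟨_, h2⟩, _⟩
        exact ha h2
      · refine ⟨0, ?_⟩
        intro a b hab
        obtain ⟨ha, rfl⟩ : a ≠ 0 ∧ a = b := hab
        apply ncard_zero_of_forall_not
        rintro v ⟨⟨h1, _⟩, ⟨_, h2⟩, _⟩
        exact h1 (by show a - v = 0; rw [show v = a from h2, sub_self])
      · refine ⟨0, ?_⟩
        intro a b hab
        obtain ⟨ha, rfl⟩ : a ≠ 0 ∧ a = b := hab
        apply ncard_zero_of_forall_not
        rintro v ⟨_, ⟨h2, _⟩, _⟩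
        exact ha h2
      · -- SJ = Dc : pin v = 0
        by_cases hc : SK = Db n
        · refine ⟨1, ?_⟩
          intro a b hab
          obtain ⟨ha, rfl⟩ : a ≠ 0 ∧ a = b := hab
          apply ncard_pin_one (a := (0:ZMod n))
          intro v
          constructor
          · rintro ⟨_, ⟨h2, _⟩, _⟩; exact h2
          · rintro rfl
            refine ⟨⟨?_, rfl⟩, ⟨rfl, ha⟩, ?_⟩
            · rw [sub_zero]; exact ha
            · rw [hc]; exact ⟨rfl, ha⟩
        · refine ⟨0, ?_⟩
          intro a b hab
          obtain ⟨ha, rfl⟩ : a ≠ 0 ∧ a = b := hab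
          apply ncard_zero_of_forall_not
          rintro v ⟨_, ⟨h2, _⟩, hKv⟩
          subst h2
          exact hc (Qset_unique hP hK hDb hKv ⟨rfl, ha⟩)
      · -- SJ ∈ P
        rcases mem_Qset_iff.1 hK with rfl | rfl | rfl | rfl | hKP
        · refine ⟨0, ?_⟩
          intro a b hab
          obtain ⟨ha, rfl⟩ : a ≠ 0 ∧ a = b := hab
          apply ncard_zero_of_forall_not
          rintro v ⟨_, _, ⟨h3, _⟩⟩
          exact ha h3
        · refine ⟨0, ?_⟩
          intro a b hab
          obtain ⟨ha, rfl⟩ : a ≠ 0 ∧ a = b := hab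
          apply ncard_zero_of_forall_not
          rintro v ⟨⟨h1, _⟩, _, ⟨_, h3⟩⟩
          exact h1 (by show a - v = 0; rw [show a = v from h3, sub_self])
        · refine ⟨0, ?_⟩
          intro a b hab
          obtain ⟨ha, rfl⟩ : a ≠ 0 ∧ a = b := hab
          apply ncard_zero_of_forall_not
          rintro v ⟨_, hJv, ⟨h3, _⟩⟩
          subst h3
          exact (part_subset_X hP hJP hJv).1 rfl
        · refine ⟨0, ?_⟩
          intro a b hab
          obtain ⟨ha, rfl⟩ : a ≠ 0 ∧ a = b := hab
          apply ncard_zero_of_forall_not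
          rintro v ⟨_, _, ⟨h3, _⟩⟩
          exact ha h3
        · -- SK ∈ P
          by_cases hTK : transI SJ = SK
          · obtain ⟨_, _, c, _, hcc⟩ := hP.2.2.1 SK hKP
            refine ⟨c, ?_⟩
            intro a b hab
            obtain ⟨ha, rfl⟩ : a ≠ 0 ∧ a = b := hab
            have hset : {v : ZMod n | (a - v, a - v) ∈ Da n ∧ (v, a) ∈ SJ ∧ (a, v) ∈ SK}
                = {v : ZMod n | (a, v) ∈ SK} := by
              ext v
              simp only [Set.mem_setOf_eq]
              constructor
              · rintro ⟨_, _, h3⟩; exact h3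
              · intro hv
                obtain ⟨_, _, hne⟩ := part_subset_X hP hKP hv
                refine ⟨⟨sub_ne_zero.2 hne, rfl⟩, ?_, hv⟩
                rw [← hTK] at hv
                exact mem_transI.1 hv
            rw [hset]
            exact (hcc a ha).1
          · refine ⟨0, ?_⟩
            intro a b hab
            obtain ⟨ha, rfl⟩ : a ≠ 0 ∧ a = b := hab
            apply ncard_zero_of_forall_not
            rintro v ⟨_, hJv, hKv⟩
            exact hTK (part_eq_part hP (transI_mem_P hP hJP) hKP (mem_transI.2 hJv) hKv)
    · refine ⟨0, ?_⟩
      intro a b hab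
      obtain ⟨ha, rfl⟩ : a ≠ 0 ∧ a = b := hab
      apply ncard_zero_of_forall_not
      rintro v ⟨⟨h1, h2⟩, _, _⟩
      exact h2 h1
    · refine ⟨0, ?_⟩
      intro a b hab
      obtain ⟨ha, rfl⟩ : a ≠ 0 ∧ a = b := hab
      apply ncard_zero_of_forall_not
      rintro v ⟨⟨h1, h2⟩, _, _⟩
      exact h2 h1
    · refine ⟨0, ?_⟩
      intro a b hab
      obtain ⟨ha, rfl⟩ : a ≠ 0 ∧ a = b := hab
      apply ncard_zero_of_forall_not
      rintro v ⟨h1, _, _⟩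
      exact (part_subset_X hP hIP h1).2.2 rfl
  -- ================= SL = Db =================
  · rcases mem_Qset_iff.1 hJ with rfl | rfl | rfl | rfl | hJP
    · -- SJ = Dz : pin v = 0
      by_cases hc : SI = Db n ∧ SK = Db n
      · refine ⟨1, ?_⟩
        intro a b hab
        obtain ⟨rfl, ha⟩ : b = 0 ∧ a ≠ 0 := hab
        apply ncard_pin_one (a := (0:ZMod n))
        intro v
        constructor
        · rintro ⟨_, ⟨h2, _⟩, _⟩; exact h2
        · rintro rfl
          refine ⟨?_, ⟨rfl, rfl⟩, ?_⟩
          · rw [hc.1]; constructor <;> simp [ha]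
          · rw [hc.2]; exact ⟨rfl, ha⟩
      · refine ⟨0, ?_⟩
        intro a b hab
        obtain ⟨rfl, ha⟩ : b = 0 ∧ a ≠ 0 := hab
        apply ncard_zero_of_forall_not
        rintro v ⟨h1, ⟨h2, _⟩, h3⟩
        subst h2
        rw [sub_zero, sub_zero] at h1
        exact hc ⟨Qset_unique hP hI hDb h1 ⟨rfl, ha⟩, Qset_unique hP hK hDb h3 ⟨rfl, ha⟩⟩
    · refine ⟨0, ?_⟩
      intro a b hab
      obtain ⟨rfl, ha⟩ : b = 0 ∧ a ≠ 0 := hab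
      apply ncard_zero_of_forall_not
      rintro v ⟨_, ⟨h2a, h2b⟩, _⟩
      exact h2a h2b
    · -- SJ = Db : v ≠ 0
      rcases mem_Qset_iff.1 hK with rfl | rfl | rfl | rfl | hKP
      · refine ⟨0, ?_⟩
        intro a b hab
        obtain ⟨rfl, ha⟩ : b = 0 ∧ a ≠ 0 := hab
        apply ncard_zero_of_forall_not
        rintro v ⟨_, _, ⟨h3, _⟩⟩
        exact ha h3
      · -- SK = Da : pin v = a
        by_cases hc : SI = Dc n
        · refine ⟨1, ?_⟩
          intro a b hab
          obtain ⟨rfl, ha⟩ : b = 0 ∧ a ≠ 0 := hab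
          apply ncard_pin_one (a := a)
          intro v
          constructor
          · rintro ⟨_, _, ⟨_, h3⟩⟩; exact h3.symm
          · rintro rfl
            refine ⟨?_, ⟨rfl, ha⟩, ⟨ha, rfl⟩⟩
            rw [hc]
            constructor <;> simp [ha]
        · refine ⟨0, ?_⟩
          intro a b hab
          obtain ⟨rfl, ha⟩ : b = 0 ∧ a ≠ 0 := hab
          apply ncard_zero_of_forall_not
          rintro v ⟨h1, _, ⟨_, h3⟩⟩
          obtain rfl : v = a := h3.symm
          rw [sub_self, zero_sub] at h1
          exact hc (Qset_unique hP hI hDc h1 ⟨rfl, neg_ne_zero.2 ha⟩)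
      · refine ⟨0, ?_⟩
        intro a b hab
        obtain ⟨rfl, ha⟩ : b = 0 ∧ a ≠ 0 := hab
        apply ncard_zero_of_forall_not
        rintro v ⟨_, ⟨_, h2⟩, ⟨h3, _⟩⟩
        exact h2 h3
      · refine ⟨0, ?_⟩
        intro a b hab
        obtain ⟨rfl, ha⟩ : b = 0 ∧ a ≠ 0 := hab
        apply ncard_zero_of_forall_not
        rintro v ⟨_, _, ⟨h3, _⟩⟩
        exact ha h3
      · -- SK ∈ P
        rcases mem_Qset_iff.1 hI with rfl | rfl | rfl | rfl | hIP
        · refine ⟨0, ?_⟩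
          intro a b hab
          obtain ⟨rfl, ha⟩ : b = 0 ∧ a ≠ 0 := hab
          apply ncard_zero_of_forall_not
          rintro v ⟨⟨h1a, h1b⟩, _, _⟩
          rw [sub_eq_zero] at h1a
          rw [sub_eq_zero] at h1b
          exact ha (h1a.trans h1b.symm)
        · refine ⟨0, ?_⟩
          intro a b hab
          obtain ⟨rfl, ha⟩ : b = 0 ∧ a ≠ 0 := hab
          apply ncard_zero_of_forall_not
          rintro v ⟨⟨h1a, h1b⟩, _, _⟩
          exact ha (sub_left_inj.1 h1b)
        · refine ⟨0, ?_⟩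
          intro a b hab
          obtain ⟨rfl, ha⟩ : b = 0 ∧ a ≠ 0 := hab
          apply ncard_zero_of_forall_not
          rintro v ⟨⟨h1a, _⟩, ⟨_, h2⟩, _⟩
          rw [sub_eq_zero] at h1a
          exact h2 h1a.symm
        · refine ⟨0, ?_⟩
          intro a b hab
          obtain ⟨rfl, ha⟩ : b = 0 ∧ a ≠ 0 := hab
          apply ncard_zero_of_forall_not
          rintro v ⟨⟨h1a, _⟩, _, h3⟩
          obtain rfl : v = a := (sub_eq_zero.1 h1a).symm
          exact (part_subset_X hP hKP h3).2.2 rfl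
        · -- SI ∈ P
          by_cases hIK : sigmaI SI = SK
          · obtain ⟨_, _, c, _, hcc⟩ := hP.2.2.1 SK hKP
            refine ⟨c, ?_⟩
            intro a b hab
            obtain ⟨rfl, ha⟩ : b = 0 ∧ a ≠ 0 := hab
            have hset : {v : ZMod n | (a - v, 0 - v) ∈ SI ∧ (v, (0:ZMod n)) ∈ Db n ∧
                (a, v) ∈ SK} = {v : ZMod n | (a, v) ∈ SK} := by
              ext v
              simp only [Set.mem_setOf_eq]
              constructor
              · rintro ⟨_, _, h3⟩; exact h3
              · intro hv
                obtain ⟨_, hv2, _⟩ := part_subset_X hP hKP hv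
                refine ⟨?_, ⟨rfl, hv2⟩, hv⟩
                rw [← hIK] at hv
                rw [zero_sub]
                exact mem_sigmaI.1 hv
            rw [hset]
            exact (hcc a ha).1
          · refine ⟨0, ?_⟩
            intro a b hab
            obtain ⟨rfl, ha⟩ : b = 0 ∧ a ≠ 0 := hab
            apply ncard_zero_of_forall_not
            rintro v ⟨h1, _, h3⟩
            rw [zero_sub] at h1
            exact hIK (part_eq_part hP (sigmaI_mem_P hP hIP) hKP (mem_sigmaI.2 h1) h3)
    · refine ⟨0, ?_⟩
      intro a b hab
      obtain ⟨rfl, ha⟩ : b = 0 ∧ a ≠ 0 := hab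
      apply ncard_zero_of_forall_not
      rintro v ⟨_, ⟨_, h2⟩, _⟩
      exact h2 rfl
    · refine ⟨0, ?_⟩
      intro a b hab
      obtain ⟨rfl, ha⟩ : b = 0 ∧ a ≠ 0 := hab
      apply ncard_zero_of_forall_not
      rintro v ⟨_, h2, _⟩
      exact (part_subset_X hP hJP h2).2.1 rfl
  -- ================= SL = Dc =================
  · rcases mem_Qset_iff.1 hK with rfl | rfl | rfl | rfl | hKP
    · -- SK = Dz : pin v = 0
      by_cases hc : SI = Dc n ∧ SJ = Dc n
      · refine ⟨1, ?_⟩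
        intro a b hab
        obtain ⟨rfl, hb⟩ : a = 0 ∧ b ≠ 0 := hab
        apply ncard_pin_one (a := (0:ZMod n))
        intro v
        constructor
        · rintro ⟨_, _, ⟨_, h3⟩⟩; exact h3
        · rintro rfl
          refine ⟨?_, ?_, ⟨rfl, rfl⟩⟩
          · rw [hc.1]; constructor <;> simp [hb]
          · rw [hc.2]; exact ⟨rfl, hb⟩
      · refine ⟨0, ?_⟩
        intro a b hab
        obtain ⟨rfl, hb⟩ : a = 0 ∧ b ≠ 0 := hab
        apply ncard_zero_of_forall_not
        rintro v ⟨h1, h2, ⟨_, h3⟩⟩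
        subst h3
        rw [sub_zero, sub_zero] at h1
        exact hc ⟨Qset_unique hP hI hDc h1 ⟨rfl, hb⟩, Qset_unique hP hJ hDc h2 ⟨rfl, hb⟩⟩
    · refine ⟨0, ?_⟩
      intro a b hab
      obtain ⟨rfl, hb⟩ : a = 0 ∧ b ≠ 0 := hab
      apply ncard_zero_of_forall_not
      rintro v ⟨_, _, ⟨h3, _⟩⟩
      exact h3 rfl
    · refine ⟨0, ?_⟩
      intro a b hab
      obtain ⟨rfl, hb⟩ : a = 0 ∧ b ≠ 0 := hab
      apply ncard_zero_of_forall_not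
      rintro v ⟨_, _, ⟨_, h3⟩⟩
      exact h3 rfl
    · -- SK = Dc : v ≠ 0
      rcases mem_Qset_iff.1 hJ with rfl | rfl | rfl | rfl | hJP
      · refine ⟨0, ?_⟩
        intro a b hab
        obtain ⟨rfl, hb⟩ : a = 0 ∧ b ≠ 0 := hab
        apply ncard_zero_of_forall_not
        rintro v ⟨_, ⟨_, h2⟩, _⟩
        exact hb h2
      · -- SJ = Da : pin v = b
        by_cases hc : SI = Db n
        · refine ⟨1, ?_⟩
          intro a b hab
          obtain ⟨rfl, hb⟩ : a = 0 ∧ b ≠ 0 := hab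
          apply ncard_pin_one (a := b)
          intro v
          constructor
          · rintro ⟨_, ⟨_, h2⟩, _⟩; exact h2
          · rintro rfl
            refine ⟨?_, ⟨hb, rfl⟩, ⟨rfl, hb⟩⟩
            rw [hc]
            constructor <;> simp [hb]
        · refine ⟨0, ?_⟩
          intro a b hab
          obtain ⟨rfl, hb⟩ : a = 0 ∧ b ≠ 0 := hab
          apply ncard_zero_of_forall_not
          rintro v ⟨h1, ⟨_, h2⟩, _⟩
          obtain rfl : v = b := h2
          rw [sub_self, zero_sub] at h1
          exact hc (Qset_unique hP hI hDb h1 ⟨rfl, neg_ne_zero.2 hb⟩)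
      · refine ⟨0, ?_⟩
        intro a b hab
        obtain ⟨rfl, hb⟩ : a = 0 ∧ b ≠ 0 := hab
        apply ncard_zero_of_forall_not
        rintro v ⟨_, ⟨h2, _⟩, _⟩
        exact hb h2
      · refine ⟨0, ?_⟩
        intro a b hab
        obtain ⟨rfl, hb⟩ : a = 0 ∧ b ≠ 0 := hab
        apply ncard_zero_of_forall_not
        rintro v ⟨_, ⟨h2, _⟩, ⟨_, h3⟩⟩
        exact h3 h2
      · -- SJ ∈ P
        rcases mem_Qset_iff.1 hI with rfl | rfl | rfl | rfl | hIP
        · refine ⟨0, ?_⟩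
          intro a b hab
          obtain ⟨rfl, hb⟩ : a = 0 ∧ b ≠ 0 := hab
          apply ncard_zero_of_forall_not
          rintro v ⟨⟨h1a, _⟩, _, ⟨_, h3⟩⟩
          rw [sub_eq_zero] at h1a
          exact h3 h1a.symm
        · refine ⟨0, ?_⟩
          intro a b hab
          obtain ⟨rfl, hb⟩ : a = 0 ∧ b ≠ 0 := hab
          apply ncard_zero_of_forall_not
          rintro v ⟨⟨_, h1b⟩, _, _⟩
          exact hb (sub_left_inj.1 h1b).symm
        · refine ⟨0, ?_⟩
          intro a b hab
          obtain ⟨rfl, hb⟩ : a = 0 ∧ b ≠ 0 := hab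
          apply ncard_zero_of_forall_not
          rintro v ⟨⟨h1a, _⟩, h2, _⟩
          obtain rfl : b = v := sub_eq_zero.1 h1a
          exact (part_subset_X hP hJP h2).2.2 rfl
        · refine ⟨0, ?_⟩
          intro a b hab
          obtain ⟨rfl, hb⟩ : a = 0 ∧ b ≠ 0 := hab
          apply ncard_zero_of_forall_not
          rintro v ⟨⟨h1a, _⟩, _, ⟨_, h3⟩⟩
          rw [sub_eq_zero] at h1a
          exact h3 h1a.symm
        · -- SI ∈ P
          by_cases hIJ : tauI SI = SJ
          · obtain ⟨_, _, c, _, hcc⟩ := hP.2.2.1 SJ hJP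
            refine ⟨c, ?_⟩
            intro a b hab
            obtain ⟨rfl, hb⟩ : a = 0 ∧ b ≠ 0 := hab
            have hset : {v : ZMod n | (0 - v, b - v) ∈ SI ∧ (v, b) ∈ SJ ∧
                ((0:ZMod n), v) ∈ Dc n} = {v : ZMod n | (v, b) ∈ SJ} := by
              ext v
              simp only [Set.mem_setOf_eq]
              constructor
              · rintro ⟨_, h2, _⟩; exact h2
              · intro hv
                obtain ⟨hv1, _, _⟩ := part_subset_X hP hJP hv
                refine ⟨?_, hv, ⟨rfl, hv1⟩⟩
                rw [← hIJ] at hv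
                rw [zero_sub]
                exact mem_tauI.1 hv
            rw [hset]
            exact (hcc b hb).2
          · refine ⟨0, ?_⟩
            intro a b hab
            obtain ⟨rfl, hb⟩ : a = 0 ∧ b ≠ 0 := hab
            apply ncard_zero_of_forall_not
            rintro v ⟨h1, h2, _⟩
            rw [zero_sub] at h1
            exact hIJ (part_eq_part hP (tauI_mem_P hP hIP) hJP (mem_tauI.2 h1) h2)
    · refine ⟨0, ?_⟩
      intro a b hab
      obtain ⟨rfl, hb⟩ : a = 0 ∧ b ≠ 0 := hab
      apply ncard_zero_of_forall_not
      rintro v ⟨_, _, h3⟩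
      exact (part_subset_X hP hKP h3).1 rfl
  -- ================= SL ∈ P =================
  · rcases mem_Qset_iff.1 hI with rfl | rfl | rfl | rfl | hIP
    · refine ⟨0, ?_⟩
      intro a b hab
      obtain ⟨_, _, hne⟩ := part_subset_X hP hLP hab
      apply ncard_zero_of_forall_not
      rintro v ⟨⟨h1a, h1b⟩, _, _⟩
      rw [sub_eq_zero] at h1a h1b
      exact hne (h1a.trans h1b.symm)
    · refine ⟨0, ?_⟩
      intro a b hab
      obtain ⟨_, _, hne⟩ := part_subset_X hP hLP hab
      apply ncard_zero_of_forall_not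
      rintro v ⟨⟨_, h1b⟩, _, _⟩
      exact hne (sub_left_inj.1 h1b)
    · -- SI = Db : pin v = b
      by_cases hc : SJ = Da n ∧ SK = SL
      · refine ⟨1, ?_⟩
        intro a b hab
        obtain ⟨ha, hb, hne⟩ := part_subset_X hP hLP hab
        apply ncard_pin_one (a := b)
        intro v
        constructor
        · rintro ⟨⟨h1, _⟩, _, _⟩; exact (sub_eq_zero.1 h1).symm
        · rintro rfl
          refine ⟨⟨sub_self _, sub_ne_zero.2 hne⟩, ?_, ?_⟩
          · rw [hc.1]; exact ⟨hb, rfl⟩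
          · rw [hc.2]; exact hab
      · refine ⟨0, ?_⟩
        intro a b hab
        obtain ⟨ha, hb, hne⟩ := part_subset_X hP hLP hab
        apply ncard_zero_of_forall_not
        rintro v ⟨⟨h1, _⟩, h2, h3⟩
        obtain rfl : v = b := (sub_eq_zero.1 h1).symm
        exact hc ⟨Qset_unique hP hJ hDa h2 ⟨hb, rfl⟩, Qset_unique hP hK hL h3 hab⟩
    · -- SI = Dc : pin v = a
      by_cases hc : SJ = SL ∧ SK = Da n
      · refine ⟨1, ?_⟩
        intro a b hab
        obtain ⟨ha, hb, hne⟩ := part_subset_X hP hLP hab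
        apply ncard_pin_one (a := a)
        intro v
        constructor
        · rintro ⟨⟨h1, _⟩, _, _⟩; exact (sub_eq_zero.1 h1).symm
        · rintro rfl
          refine ⟨⟨sub_self _, sub_ne_zero.2 (Ne.symm hne)⟩, ?_, ?_⟩
          · rw [hc.1]; exact hab
          · rw [hc.2]; exact ⟨ha, rfl⟩
      · refine ⟨0, ?_⟩
        intro a b hab
        obtain ⟨ha, hb, hne⟩ := part_subset_X hP hLP hab
        apply ncard_zero_of_forall_not
        rintro v ⟨⟨h1, _⟩, h2, h3⟩
        obtain rfl : v = a := (sub_eq_zero.1 h1).symm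
        exact hc ⟨Qset_unique hP hJ hL h2 hab, Qset_unique hP hK hDa h3 ⟨ha, rfl⟩⟩
    · -- SI ∈ P
      rcases mem_Qset_iff.1 hJ with rfl | rfl | rfl | rfl | hJP
      · refine ⟨0, ?_⟩
        intro a b hab
        obtain ⟨ha, hb, hne⟩ := part_subset_X hP hLP hab
        apply ncard_zero_of_forall_not
        rintro v ⟨_, ⟨_, h2⟩, _⟩
        exact hb h2
      · refine ⟨0, ?_⟩
        intro a b hab
        obtain ⟨ha, hb, hne⟩ := part_subset_X hP hLP hab
        apply ncard_zero_of_forall_not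
        rintro v ⟨h1, ⟨_, h2⟩, _⟩
        obtain rfl : v = b := h2
        exact (part_subset_X hP hIP h1).2.1 (by rw [sub_self])
      · refine ⟨0, ?_⟩
        intro a b hab
        obtain ⟨ha, hb, hne⟩ := part_subset_X hP hLP hab
        apply ncard_zero_of_forall_not
        rintro v ⟨_, ⟨h2, _⟩, _⟩
        exact hb h2
      · -- SJ = Dc : pin v = 0
        by_cases hc : SI = SL ∧ SK = Db n
        · refine ⟨1, ?_⟩
          intro a b hab
          obtain ⟨ha, hb, hne⟩ := part_subset_X hP hLP hab
          apply ncard_pin_one (a := (0:ZMod n))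
          intro v
          constructor
          · rintro ⟨_, ⟨h2, _⟩, _⟩; exact h2
          · rintro rfl
            refine ⟨?_, ⟨rfl, hb⟩, ?_⟩
            · rw [hc.1, sub_zero, sub_zero]; exact hab
            · rw [hc.2]; exact ⟨rfl, ha⟩
        · refine ⟨0, ?_⟩
          intro a b hab
          obtain ⟨ha, hb, hne⟩ := part_subset_X hP hLP hab
          apply ncard_zero_of_forall_not
          rintro v ⟨h1, ⟨h2, _⟩, h3⟩
          subst h2
          rw [sub_zero, sub_zero] at h1
          exact hc ⟨part_eq_part hP hIP hLP h1 hab, Qset_unique hP hK hDb h3 ⟨rfl, ha⟩⟩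
      · -- SJ ∈ P
        rcases mem_Qset_iff.1 hK with rfl | rfl | rfl | rfl | hKP
        · refine ⟨0, ?_⟩
          intro a b hab
          obtain ⟨ha, hb, hne⟩ := part_subset_X hP hLP hab
          apply ncard_zero_of_forall_not
          rintro v ⟨_, _, ⟨h3, _⟩⟩
          exact ha h3
        · refine ⟨0, ?_⟩
          intro a b hab
          obtain ⟨ha, hb, hne⟩ := part_subset_X hP hLP hab
          apply ncard_zero_of_forall_not
          rintro v ⟨h1, _, ⟨_, h3⟩⟩
          obtain rfl : v = a := h3.symm
          exact (part_subset_X hP hIP h1).1 (by rw [sub_self])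
        · refine ⟨0, ?_⟩
          intro a b hab
          obtain ⟨ha, hb, hne⟩ := part_subset_X hP hLP hab
          apply ncard_zero_of_forall_not
          rintro v ⟨_, h2, ⟨h3, _⟩⟩
          subst h3
          exact (part_subset_X hP hJP h2).1 rfl
        · refine ⟨0, ?_⟩
          intro a b hab
          obtain ⟨ha, hb, hne⟩ := part_subset_X hP hLP hab
          apply ncard_zero_of_forall_not
          rintro v ⟨_, _, ⟨h3, _⟩⟩
          exact ha h3
        · -- all four in P : axiom (c)
          obtain ⟨c, hc⟩ := hP.2.2.2.2 SI hIP SJ hJP SK hKP SL hLP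
          refine ⟨c, ?_⟩
          intro a b hab
          have hset : {v : ZMod n | (a - v, b - v) ∈ SI ∧ (v, b) ∈ SJ ∧ (a, v) ∈ SK}
              = {w : ZMod n | w ≠ 0 ∧ w ≠ (a, b).1 ∧ w ≠ (a, b).2 ∧
                  ((a, b).1 - w, (a, b).2 - w) ∈ SI ∧ (w, (a, b).2) ∈ SJ ∧
                  ((a, b).1, w) ∈ SK} := by
            ext v
            simp only [Set.mem_setOf_eq]
            constructor
            · rintro ⟨h1, h2, h3⟩
              obtain ⟨hv1, _, hv3⟩ := part_subset_X hP hJP h2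
              obtain ⟨_, _, hv4⟩ := part_subset_X hP hKP h3
              exact ⟨hv1, Ne.symm hv4, hv3, h1, h2, h3⟩
            · rintro ⟨_, _, _, h1, h2, h3⟩
              exact ⟨h1, h2, h3⟩
          rw [hset]
          exact hc (a, b) hab

end Aux3
section Aux4

variable {n : ℕ} {P : Set (Set (ZMod n × ZMod n))}

lemma zmod_one_ne_zero (hn : 3 ≤ n) : (1 : ZMod n) ≠ 0 := by
  haveI : NeZero n := ⟨by omega⟩
  intro h
  have := (ZMod.natCast_eq_zero_iff 1 n).1 (by simpa using h)
  have := Nat.le_of_dvd (by omega) this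
  omega

lemma zmod_two_ne_zero (hn : 3 ≤ n) : (2 : ZMod n) ≠ 0 := by
  haveI : NeZero n := ⟨by omega⟩
  intro h
  have := (ZMod.natCast_eq_zero_iff 2 n).1 (by simpa using h)
  have := Nat.le_of_dvd (by omega) this
  omega

lemma zmod_one_ne_two (hn : 3 ≤ n) : (1 : ZMod n) ≠ 2 := by
  intro h
  exact zmod_one_ne_zero hn (by linear_combination -h)

lemma Qset_nonempty (hn : 3 ≤ n) (hP : IsASTRegular P) {S : Set (ZMod n × ZMod n)}
    (hS : S ∈ Qset P) : S.Nonempty := by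
  rcases mem_Qset_iff.1 hS with rfl | rfl | rfl | rfl | hS
  · exact ⟨(0, 0), rfl, rfl⟩
  · exact ⟨(1, 1), zmod_one_ne_zero hn, rfl⟩
  · exact ⟨(1, 0), rfl, zmod_one_ne_zero hn⟩
  · exact ⟨(0, 1), rfl, zmod_one_ne_zero hn⟩
  · exact (hP.1 S hS).2

lemma Qset_cover (hP : IsASTRegular P) (p : ZMod n × ZMod n) : ∃ S ∈ Qset P, p ∈ S := by
  by_cases h1 : p.1 = 0
  · by_cases h2 : p.2 = 0
    · exact ⟨Dz n, by simp [Qset], ⟨h1, h2⟩⟩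
    · exact ⟨Dc n, by simp [Qset], ⟨h1, h2⟩⟩
  · by_cases h2 : p.2 = 0
    · exact ⟨Db n, by simp [Qset], ⟨h2, h1⟩⟩
    · by_cases h12 : p.1 = p.2
      · exact ⟨Da n, by simp [Qset], ⟨h1, h12⟩⟩
      · obtain ⟨I, ⟨hI, hpI⟩, _⟩ := hP.2.1 p ⟨h1, h2, h12⟩
        exact ⟨I, mem_Qset_iff.2 (Or.inr (Or.inr (Or.inr (Or.inr hI)))), hpI⟩

end Aux4
section Aux5

variable {n : ℕ} {P : Set (Set (ZMod n × ZMod n))}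

lemma mem_of_pair_eq {n : ℕ} {S : Set (ZMod n × ZMod n)} {a b c d : ZMod n}
    (h : (c, d) ∈ S) (h1 : a = c) (h2 : b = d) : (a, b) ∈ S := by
  rw [h1, h2]; exact h

lemma dpre_circulant (S : Set (ZMod n × ZMod n)) : IsCirculant (dpre S) := by
  intro i j k h
  show (j + 1 - (i + 1), k + 1 - (i + 1)) ∈ S
  have e1 : j + 1 - (i + 1) = j - i := by ring
  have e2 : k + 1 - (i + 1) = k - i := by ring
  rw [e1, e2]; exact h

lemma dpre_nonempty {S : Set (ZMod n × ZMod n)} (hS : S.Nonempty) : (dpre S).Nonempty := by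
  obtain ⟨p, hp⟩ := hS
  refine ⟨(0, p.1, p.2), ?_⟩
  show (p.1 - 0, p.2 - 0) ∈ S
  simpa using hp

/-- swap of the first two coordinates. -/
def swp12 (t : ZMod n × ZMod n × ZMod n) : ZMod n × ZMod n × ZMod n := (t.2.1, t.1, t.2.2)

/-- swap of the last two coordinates. -/
def swp23 (t : ZMod n × ZMod n × ZMod n) : ZMod n × ZMod n × ZMod n := (t.1, t.2.2, t.2.1)

lemma swp12_image_dpre (S : Set (ZMod n × ZMod n)) :
    swp12 '' dpre S = dpre (tauI S) := by
  ext t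
  constructor
  · rintro ⟨s, hs, rfl⟩
    show (s.1 - s.2.1, s.2.2 - s.2.1) ∈ tauI S
    rw [mem_tauI]
    exact mem_of_pair_eq hs (by ring) (by ring)
  · intro ht
    refine ⟨(t.2.1, t.1, t.2.2), ?_, rfl⟩
    have h' := mem_tauI.1 (ht : (t.2.1 - t.1, t.2.2 - t.1) ∈ tauI S)
    show (t.1 - t.2.1, t.2.2 - t.2.1) ∈ S
    exact mem_of_pair_eq h' (by ring) (by ring)

lemma swp23_image_dpre (S : Set (ZMod n × ZMod n)) :
    swp23 '' dpre S = dpre (transI S) := by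
  ext t
  constructor
  · rintro ⟨s, hs, rfl⟩
    show (s.2.2 - s.1, s.2.1 - s.1) ∈ transI S
    rw [mem_transI]
    exact hs
  · intro ht
    refine ⟨(t.1, t.2.2, t.2.1), ?_, rfl⟩
    show (t.2.2 - t.1, t.2.1 - t.1) ∈ S
    exact mem_transI.1 (ht : (t.2.1 - t.1, t.2.2 - t.1) ∈ transI S)

lemma invol_image {α : Type*} {f : α → α} (hf : ∀ x, f (f x) = x) (S : Set α) :
    f '' S = f ⁻¹' S := by
  ext x
  constructor
  · rintro ⟨s, hs, rfl⟩
    show f (f s) ∈ S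
    rw [hf]; exact hs
  · intro hx
    exact ⟨f x, hx, hf x⟩

lemma swp12_invol : ∀ t : ZMod n × ZMod n × ZMod n, swp12 (swp12 t) = t := fun _ => rfl
lemma swp23_invol : ∀ t : ZMod n × ZMod n × ZMod n, swp23 (swp23 t) = t := fun _ => rfl

lemma swp12_image_triv0 : swp12 '' triv0 (ZMod n) = triv0 (ZMod n) := by
  rw [invol_image swp12_invol]
  ext t
  show (t.2.1 = t.1 ∧ t.1 = t.2.2) ↔ (t.1 = t.2.1 ∧ t.2.1 = t.2.2)
  constructor
  · rintro ⟨h1, h2⟩; exact ⟨h1.symm, h1.trans h2⟩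
  · rintro ⟨h1, h2⟩; exact ⟨h1.symm, h1.trans h2⟩

lemma swp12_image_triv1 : swp12 '' triv1 (ZMod n) = triv2 (ZMod n) := by
  rw [invol_image swp12_invol]
  ext t
  show (t.2.1 ≠ t.1 ∧ t.1 = t.2.2) ↔ (t.1 = t.2.2 ∧ t.1 ≠ t.2.1)
  constructor
  · rintro ⟨h1, h2⟩; exact ⟨h2, fun h => h1 h.symm⟩
  · rintro ⟨h1, h2⟩; exact ⟨fun h => h2 h.symm, h1⟩

lemma swp12_image_triv2 : swp12 '' triv2 (ZMod n) = triv1 (ZMod n) := by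
  rw [invol_image swp12_invol]
  ext t
  show (t.2.1 = t.2.2 ∧ t.2.1 ≠ t.1) ↔ (t.1 ≠ t.2.1 ∧ t.2.1 = t.2.2)
  constructor
  · rintro ⟨h1, h2⟩; exact ⟨fun h => h2 h.symm, h1⟩
  · rintro ⟨h1, h2⟩; exact ⟨h2, fun h => h1 h.symm⟩

lemma swp12_image_triv3 : swp12 '' triv3 (ZMod n) = triv3 (ZMod n) := by
  rw [invol_image swp12_invol]
  ext t
  show (t.2.1 = t.1 ∧ t.1 ≠ t.2.2) ↔ (t.1 = t.2.1 ∧ t.2.1 ≠ t.2.2)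
  constructor
  · rintro ⟨h1, h2⟩; exact ⟨h1.symm, fun h => h2 (h1.symm ▸ h)⟩
  · rintro ⟨h1, h2⟩; exact ⟨h1.symm, fun h => h2 (h1 ▸ h)⟩

lemma swp23_image_triv0 : swp23 '' triv0 (ZMod n) = triv0 (ZMod n) := by
  rw [invol_image swp23_invol]
  ext t
  show (t.1 = t.2.2 ∧ t.2.2 = t.2.1) ↔ (t.1 = t.2.1 ∧ t.2.1 = t.2.2)
  constructor
  · rintro ⟨h1, h2⟩; exact ⟨h1.trans h2, h2.symm⟩
  · rintro ⟨h1, h2⟩; exact ⟨h1.trans h2, h2.symm⟩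

lemma swp23_image_triv1 : swp23 '' triv1 (ZMod n) = triv1 (ZMod n) := by
  rw [invol_image swp23_invol]
  ext t
  show (t.1 ≠ t.2.2 ∧ t.2.2 = t.2.1) ↔ (t.1 ≠ t.2.1 ∧ t.2.1 = t.2.2)
  constructor
  · rintro ⟨h1, h2⟩; exact ⟨fun h => h1 (h2 ▸ h), h2.symm⟩
  · rintro ⟨h1, h2⟩; exact ⟨fun h => h1 (h2.symm ▸ h), h2.symm⟩

lemma swp23_image_triv2 : swp23 '' triv2 (ZMod n) = triv3 (ZMod n) := by
  rw [invol_image swp23_invol]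
  ext t
  show (t.1 = t.2.1 ∧ t.1 ≠ t.2.2) ↔ (t.1 = t.2.1 ∧ t.2.1 ≠ t.2.2)
  constructor
  · rintro ⟨h1, h2⟩; exact ⟨h1, fun h => h2 (h1.trans h)⟩
  · rintro ⟨h1, h2⟩; exact ⟨h1, fun h => h2 (h1.symm.trans h)⟩

lemma swp23_image_triv3 : swp23 '' triv3 (ZMod n) = triv2 (ZMod n) := by
  rw [invol_image swp23_invol]
  ext t
  show (t.1 = t.2.2 ∧ t.2.2 ≠ t.2.1) ↔ (t.1 = t.2.2 ∧ t.1 ≠ t.2.1)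
  constructor
  · rintro ⟨h1, h2⟩; exact ⟨h1, fun h => h2 (h1.symm.trans h)⟩
  · rintro ⟨h1, h2⟩; exact ⟨h1, fun h => h2 (h1.trans h)⟩

lemma swp12_image_mem (hP : IsASTRegular P) {R : Set (ZMod n × ZMod n × ZMod n)}
    (hR : R ∈ ASTofPartition P) : swp12 '' R ∈ ASTofPartition P := by
  rcases hR with htriv | ⟨I, hI, rfl⟩
  · rcases htriv with rfl | rfl | rfl | rfl
    · rw [swp12_image_triv0]; exact Or.inl (by simp [trivials])
    · rw [swp12_image_triv1]; exact Or.inl (by simp [trivials])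
    · rw [swp12_image_triv2]; exact Or.inl (by simp [trivials])
    · rw [swp12_image_triv3]; exact Or.inl (by simp [trivials])
  · rw [RI_eq_dpre, swp12_image_dpre, ← RI_eq_dpre]
    exact Or.inr ⟨tauI I, tauI_mem_P hP hI, rfl⟩

lemma swp23_image_mem (hP : IsASTRegular P) {R : Set (ZMod n × ZMod n × ZMod n)}
    (hR : R ∈ ASTofPartition P) : swp23 '' R ∈ ASTofPartition P := by
  rcases hR with htriv | ⟨I, hI, rfl⟩
  · rcases htriv with rfl | rfl | rfl | rfl
    · rw [swp23_image_triv0]; exact Or.inl (by simp [trivials])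
    · rw [swp23_image_triv1]; exact Or.inl (by simp [trivials])
    · rw [swp23_image_triv2]; exact Or.inl (by simp [trivials])
    · rw [swp23_image_triv3]; exact Or.inl (by simp [trivials])
  · rw [RI_eq_dpre, swp23_image_dpre, ← RI_eq_dpre]
    exact Or.inr ⟨transI I, transI_mem_P hP hI, rfl⟩

lemma perm_enum : ∀ τ : Equiv.Perm (Fin 3),
    (τ 0, τ 1, τ 2) = ((0 : Fin 3), (1 : Fin 3), (2 : Fin 3)) ∨
    (τ 0, τ 1, τ 2) = ((0 : Fin 3), (2 : Fin 3), (1 : Fin 3)) ∨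
    (τ 0, τ 1, τ 2) = ((1 : Fin 3), (0 : Fin 3), (2 : Fin 3)) ∨
    (τ 0, τ 1, τ 2) = ((1 : Fin 3), (2 : Fin 3), (0 : Fin 3)) ∨
    (τ 0, τ 1, τ 2) = ((2 : Fin 3), (0 : Fin 3), (1 : Fin 3)) ∨
    (τ 0, τ 1, τ 2) = ((2 : Fin 3), (1 : Fin 3), (0 : Fin 3)) := by decide

lemma A3_full (hP : IsASTRegular P) {R : Set (ZMod n × ZMod n × ZMod n)}
    (hR : R ∈ ASTofPartition P) (σ : Equiv.Perm (Fin 3)) :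
    permTriple σ '' R ∈ ASTofPartition P := by
  rcases perm_enum σ with h | h | h | h | h | h <;>
    (simp only [Prod.mk.injEq] at h; obtain ⟨h0, h1, h2⟩ := h)
  · have he : permTriple σ = (id : ZMod n × ZMod n × ZMod n → _) := by
      funext t; simp [permTriple, h0, h1, h2]
    rw [he, Set.image_id]; exact hR
  · have he : permTriple σ = (swp23 : ZMod n × ZMod n × ZMod n → _) := by
      funext t; simp [permTriple, h0, h1, h2, swp23]
    rw [he]; exact swp23_image_mem hP hR
  · have he : permTriple σ = (swp12 : ZMod n × ZMod n × ZMod n → _) := by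
      funext t; simp [permTriple, h0, h1, h2, swp12]
    rw [he]; exact swp12_image_mem hP hR
  · have he : permTriple σ = (swp23 ∘ swp12 : ZMod n × ZMod n × ZMod n → _) := by
      funext t; simp [permTriple, h0, h1, h2, swp12, swp23, Function.comp]
    rw [he, Set.image_comp]
    exact swp23_image_mem hP (swp12_image_mem hP hR)
  · have he : permTriple σ = (swp12 ∘ swp23 : ZMod n × ZMod n × ZMod n → _) := by
      funext t; simp [permTriple, h0, h1, h2, swp12, swp23, Function.comp]
    rw [he, Set.image_comp]
    exact swp12_image_mem hP (swp23_image_mem hP hR)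
  · have he : permTriple σ = (swp12 ∘ swp23 ∘ swp12 : ZMod n × ZMod n × ZMod n → _) := by
      funext t; simp [permTriple, h0, h1, h2, swp12, swp23, Function.comp]
    rw [he, Set.image_comp, Set.image_comp]
    exact swp12_image_mem hP (swp23_image_mem hP (swp12_image_mem hP hR))

end Aux5

/-- If `𝓘` is an AST-regular partition of `X`, then
`𝓐(𝓘) = {R₀,R₁,R₂,R₃} ∪ {R_I : I ∈ 𝓘}` is a circulant AST on `Ω = ZMod n`. -/
theorem ASTofPartition_isCirculantAST (n : ℕ) (hn : 3 ≤ n)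
    (P : Set (Set (ZMod n × ZMod n))) (hP : IsASTRegular P) :
    IsCirculantAST (ASTofPartition P) := by
  constructor
  · refine ⟨?_, ?_, ?_, ?_, ?_, ?_, ?_⟩
    · -- nonempty relations
      intro R hR
      obtain ⟨S, hS, rfl⟩ := mem_ASTofPartition_iff.1 hR
      exact dpre_nonempty (Qset_nonempty hn hP hS)
    · -- partition of Ω³
      intro t
      obtain ⟨S, hS, hpS⟩ := Qset_cover hP (t.2.1 - t.1, t.2.2 - t.1)
      refine ⟨dpre S, ⟨mem_ASTofPartition_iff.2 ⟨S, hS, rfl⟩, hpS⟩, ?_⟩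
      rintro R ⟨hR, htR⟩
      obtain ⟨S', hS', rfl⟩ := mem_ASTofPartition_iff.1 hR
      rw [Qset_unique hP hS' hS htR hpS]
    · -- trivial relations belong
      exact Set.subset_union_left
    · -- a nontrivial relation exists
      have h1 : (1 : ZMod n) ≠ 0 := zmod_one_ne_zero hn
      have h2 : (2 : ZMod n) ≠ 0 := zmod_two_ne_zero hn
      have h12 : (1 : ZMod n) ≠ 2 := zmod_one_ne_two hn
      obtain ⟨I, ⟨hI, hpI⟩, -⟩ := hP.2.1 ((1 : ZMod n), (2 : ZMod n)) ⟨h1, h2, h12⟩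
      refine ⟨RI I, Or.inr ⟨I, hI, rfl⟩, ?_⟩
      have ht0 : ((0 : ZMod n), (1 : ZMod n), (2 : ZMod n)) ∈ RI I := by
        rw [mem_RI_iff]
        simpa using hpI
      intro htriv
      rcases htriv with h | h | h | h <;> rw [h] at ht0
      · exact h1 ht0.1.symm
      · exact h12 ht0.2
      · exact h2 ht0.1.symm
      · exact h1 ht0.1.symm
    · -- A1
      intro R hR hnt
      rcases hR with h | ⟨I, hI, rfl⟩
      · exact absurd h hnt
      obtain ⟨_, _, c, hc0, hcc⟩ := hP.2.2.1 I hI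
      refine ⟨c, hc0, ?_⟩
      intro x y hxy
      rw [RI_eq_dpre]
      have hseq : {z : ZMod n | (x, y, z) ∈ dpre I}
          = (fun j => j + x) '' {j : ZMod n | (y - x, j) ∈ I} := by
        ext z
        simp only [Set.mem_setOf_eq, Set.mem_image]
        constructor
        · intro h; exact ⟨z - x, h, by ring⟩
        · rintro ⟨j, hj, rfl⟩
          show (y - x, j + x - x) ∈ I
          exact mem_of_pair_eq hj rfl (by ring)
      rw [hseq, Set.ncard_image_of_injective _ (add_left_injective x)]
      exact (hcc (y - x) (sub_ne_zero.2 (Ne.symm hxy))).1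
    · -- A2
      intro Ri hRi Rj hRj Rk hRk Rl hRl
      obtain ⟨SI, hSI, rfl⟩ := mem_ASTofPartition_iff.1 hRi
      obtain ⟨SJ, hSJ, rfl⟩ := mem_ASTofPartition_iff.1 hRj
      obtain ⟨SK, hSK, rfl⟩ := mem_ASTofPartition_iff.1 hRk
      obtain ⟨SL, hSL, rfl⟩ := mem_ASTofPartition_iff.1 hRl
      obtain ⟨c, hc⟩ := keyA2 hP hSI hSJ hSK hSL
      refine ⟨c, ?_⟩
      intro x y z hxyz
      have hseq : {w : ZMod n |
            (w, y, z) ∈ dpre SI ∧ (x, w, z) ∈ dpre SJ ∧ (x, y, w) ∈ dpre SK}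
          = (fun v => v + x) '' {v : ZMod n | ((y - x) - v, (z - x) - v) ∈ SI ∧
              (v, z - x) ∈ SJ ∧ (y - x, v) ∈ SK} := by
        ext w
        simp only [Set.mem_setOf_eq, Set.mem_image]
        constructor
        · rintro ⟨hw1, hw2, hw3⟩
          refine ⟨w - x, ⟨?_, ?_, ?_⟩, by ring⟩
          · exact mem_of_pair_eq (hw1 : (y - w, z - w) ∈ SI) (by ring) (by ring)
          · exact hw2
          · exact hw3
        · rintro ⟨v, ⟨hv1, hv2, hv3⟩, rfl⟩
          refine ⟨?_, ?_, ?_⟩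
          · show (y - (v + x), z - (v + x)) ∈ SI
            exact mem_of_pair_eq hv1 (by ring) (by ring)
          · show (v + x - x, z - x) ∈ SJ
            exact mem_of_pair_eq hv2 (by ring) rfl
          · show (y - x, v + x - x) ∈ SK
            exact mem_of_pair_eq hv3 rfl (by ring)
      rw [hseq, Set.ncard_image_of_injective _ (add_left_injective x)]
      exact hc (y - x) (z - x) hxyz
    · -- A3
      intro R hR σ
      exact A3_full hP hR σ
  · -- circulance
    intro R hR
    obtain ⟨S, -, rfl⟩ := mem_ASTofPartition_iff.1 hR
    exact dpre_circulant S

end CirculantAST
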